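/- Let X and Y be measurable spaces, let ε ∈ (0,1), let D be a probability measure on X × Y, and let g : X → Y be a function whose disagreement set {(x,y) : g(x) ≠ y} is measurable. Set n = ⌈(432/ε)·ln 100⌉ and consider the product measure D^{⊗n} on (X × Y)^n. Then with D^{⊗n}-probability at least 1 − 1/100, the sample tuple T satisfies both: (1) if err_D(g) ≤ ε/12 then err_T(g) ≤ ε/6, and (2) if err_D(g) > ε/4 then err_T(g) > ε/6. -/

import Mathlib

/-!
The number of sample points in the disagreement set is a sum of `n` independent Bernoulli(`p`)
variables, so its moment generating function is `(1 + p (eᵗ - 1))ⁿ ≤ exp (n p (eᵗ - 1))`.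
Chernoff's bound at `t = log 2` (upper tail) and `t = -log 2` (lower tail), together with
`n ε ≥ 432 log 100`, puts each tail beyond the threshold `n ε / 6` below `1/100`; for a given `p`
at most one of the two tails matters.
-/

open MeasureTheory Finset Real ProbabilityTheory
open scoped Classical

section SampleCount

variable {Ω ι : Type*} [Fintype ι] {A : Set Ω}

lemma exp_mul_indicator_one (t : ℝ) (ω : Ω) :
    exp (t * A.indicator 1 ω) = A.indicator (fun _ => exp t - 1) ω + 1 := by
  by_cases h : ω ∈ A <;> simp [h]

lemma card_filter_mem_eq_sum_indicator (T : ι → Ω) :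
    (#{j | T j ∈ A} : ℝ) = ∑ j, A.indicator 1 (T j) := by
  rw [Finset.card_filter]
  push_cast
  exact Finset.sum_congr rfl fun j _ => by by_cases h : T j ∈ A <;> simp [h]

lemma exp_mul_card_filter_mem (t : ℝ) (T : ι → Ω) :
    exp (t * #{j | T j ∈ A}) = ∏ j, exp (t * A.indicator 1 (T j)) := by
  rw [card_filter_mem_eq_sum_indicator, Finset.mul_sum, exp_sum]

variable [MeasurableSpace Ω] {D : Measure Ω} [IsProbabilityMeasure D]

lemma integrable_exp_mul_indicator_one (hA : MeasurableSet A) (t : ℝ) :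
    Integrable (fun ω => exp (t * A.indicator 1 ω)) D := by
  simp_rw [exp_mul_indicator_one]
  exact ((integrable_const _).indicator hA).add (integrable_const 1)

lemma mgf_indicator_one (hA : MeasurableSet A) (t : ℝ) :
    mgf (A.indicator 1) D t = 1 + D.real A * (exp t - 1) := by
  simp_rw [mgf, exp_mul_indicator_one]
  rw [integral_add ((integrable_const _).indicator hA) (integrable_const 1),
    integral_indicator_const _ hA]
  simp [add_comm]

lemma mgf_indicator_one_le (hA : MeasurableSet A) (t : ℝ) :
    mgf (A.indicator 1) D t ≤ exp (D.real A * (exp t - 1)) := by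
  rw [mgf_indicator_one hA, add_comm]
  exact add_one_le_exp _

lemma integrable_exp_mul_card_filter_mem (hA : MeasurableSet A) (t : ℝ) :
    Integrable (fun T : ι → Ω => exp (t * #{j | T j ∈ A})) (Measure.pi fun _ => D) := by
  simp_rw [exp_mul_card_filter_mem]
  exact Integrable.fintype_prod fun _ => integrable_exp_mul_indicator_one hA t

lemma mgf_card_filter_mem_le (hA : MeasurableSet A) (t : ℝ) :
    mgf (fun T : ι → Ω => (#{j | T j ∈ A} : ℝ)) (Measure.pi fun _ => D) t ≤
      exp (Fintype.card ι * D.real A * (exp t - 1)) := by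
  have hprod : mgf (fun T : ι → Ω => (#{j | T j ∈ A} : ℝ)) (Measure.pi fun _ => D) t =
      mgf (A.indicator 1) D t ^ Fintype.card ι := by
    simp_rw [mgf, exp_mul_card_filter_mem]
    exact integral_fintype_prod_eq_pow (fun ω => exp (t * A.indicator 1 ω))
  rw [hprod, mul_assoc, exp_nat_mul]
  exact pow_le_pow_left₀ mgf_nonneg (mgf_indicator_one_le hA t) _

lemma measureReal_card_filter_mem_ge_le_exp (hA : MeasurableSet A) {t : ℝ} (ht : 0 ≤ t)
    (a : ℝ) :
    (Measure.pi fun _ : ι => D).real {T | a ≤ (#{j | T j ∈ A} : ℝ)} ≤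
      exp (-t * a + Fintype.card ι * D.real A * (exp t - 1)) := by
  rw [exp_add]
  exact (measure_ge_le_exp_mul_mgf a ht (integrable_exp_mul_card_filter_mem hA t)).trans
    (by gcongr; exact mgf_card_filter_mem_le hA t)

lemma measureReal_card_filter_mem_le_le_exp (hA : MeasurableSet A) {t : ℝ} (ht : t ≤ 0)
    (a : ℝ) :
    (Measure.pi fun _ : ι => D).real {T | (#{j | T j ∈ A} : ℝ) ≤ a} ≤
      exp (-t * a + Fintype.card ι * D.real A * (exp t - 1)) := by
  rw [exp_add]
  exact (measure_le_le_exp_mul_mgf a ht (integrable_exp_mul_card_filter_mem hA t)).trans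
    (by gcongr; exact mgf_card_filter_mem_le hA t)

end SampleCount

section WeakTest

variable {Ω ι : Type*} [MeasurableSpace Ω] [Fintype ι] {D : Measure Ω} [IsProbabilityMeasure D]
  {A : Set Ω} {ε : ℝ}

lemma measureReal_card_filter_mem_ge_le_hundredth (hA : MeasurableSet A)
    (hN : 432 * log 100 ≤ Fintype.card ι * ε) (hp : D.real A ≤ ε / 12) :
    (Measure.pi fun _ : ι => D).real {T | Fintype.card ι * ε / 6 ≤ (#{j | T j ∈ A} : ℝ)} ≤
      1 / 100 := by
  refine (measureReal_card_filter_mem_ge_le_exp hA (log_nonneg one_le_two) _).trans ?_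
  have hNp : Fintype.card ι * D.real A ≤ Fintype.card ι * (ε / 12) := by gcongr
  have hlog2 := log_two_gt_d9
  have hlog100 : 0 < log 100 := log_pos (by norm_num)
  calc _ ≤ exp (-log 100) := by
        -- the exponent is at most `(1/12 - log 2 / 6) n ε ≤ -n ε / 32`
        rw [exp_log two_pos, exp_le_exp]
        nlinarith
    _ = 1 / 100 := by rw [exp_neg, exp_log (by norm_num)]; norm_num

lemma measureReal_card_filter_mem_le_le_hundredth (hA : MeasurableSet A)
    (hN : 432 * log 100 ≤ Fintype.card ι * ε) (hp : ε / 4 ≤ D.real A) :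
    (Measure.pi fun _ : ι => D).real {T | (#{j | T j ∈ A} : ℝ) ≤ Fintype.card ι * ε / 6} ≤
      1 / 100 := by
  have ht : -log 2 ≤ 0 := neg_nonpos.mpr (log_nonneg one_le_two)
  refine (measureReal_card_filter_mem_le_le_exp hA ht _).trans ?_
  have hNp : Fintype.card ι * (ε / 4) ≤ Fintype.card ι * D.real A := by gcongr
  have hlog2 := log_two_lt_d9
  have hlog100 : 0 < log 100 := log_pos (by norm_num)
  calc _ ≤ exp (-log 100) := by
        -- the exponent is at most `(log 2 / 6 - 1/8) n ε ≤ -n ε / 432`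
        rw [exp_neg (log 2), exp_log two_pos, exp_le_exp]
        nlinarith
    _ = 1 / 100 := by rw [exp_neg, exp_log (by norm_num)]; norm_num

end WeakTest

lemma ofReal_one_sub_le_of_compl_subset {α : Type*} [MeasurableSpace α] {μ : Measure α}
    [IsProbabilityMeasure μ] {B S : Set α} {δ : ℝ} (hB : μ.real B ≤ δ) (hBS : Bᶜ ⊆ S) :
    ENNReal.ofReal (1 - δ) ≤ μ S := by
  have hcover : 1 ≤ μ.real B + μ.real S :=
    calc 1 = μ.real (B ∪ Bᶜ) := by simp
      _ ≤ μ.real B + μ.real Bᶜ := measureReal_union_le _ _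
      _ ≤ μ.real B + μ.real S := by gcongr; exact measure_ne_top μ S
  rw [← ofReal_measureReal (measure_ne_top μ S)]
  exact ENNReal.ofReal_le_ofReal (by linarith)

/-- Correctness of the `WeakTest` procedure for a single distribution: drawing
`n = ⌈(432/ε)·ln 100⌉` i.i.d. samples from `D`, with probability at least
`1 - 1/100` the empirical error of `g` on the sample is at most `ε/6` whenever
`err_D(g) ≤ ε/12`, and strictly greater than `ε/6` whenever `err_D(g) > ε/4`. -/
theorem weakTest_correct
    {X Y : Type*} [MeasurableSpace X] [MeasurableSpace Y]
    (ε : ℝ) (hε : ε ∈ Set.Ioo (0 : ℝ) 1)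
    (D : Measure (X × Y)) [IsProbabilityMeasure D]
    (g : X → Y) (hg : MeasurableSet {p : X × Y | g p.1 ≠ p.2})
    (n : ℕ) (hn : n = ⌈(432 / ε) * Real.log 100⌉₊)
    (μ : Measure (Fin n → X × Y))
    (hμ : μ = Measure.pi (fun _ : Fin n => D)) :
    ENNReal.ofReal (1 - 1 / 100) ≤
      μ {T | ((D {p : X × Y | g p.1 ≠ p.2}).toReal ≤ ε / 12 →
          ((Finset.univ.filter (fun j : Fin n => g (T j).1 ≠ (T j).2)).card : ℝ) / n ≤ ε / 6) ∧
        (ε / 4 < (D {p : X × Y | g p.1 ≠ p.2}).toReal →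
          ε / 6 < ((Finset.univ.filter (fun j : Fin n => g (T j).1 ≠ (T j).2)).card : ℝ) / n)} := by
  subst hμ
  obtain ⟨hε0, -⟩ := hε
  have hN : 432 * log 100 ≤ Fintype.card (Fin n) * ε := by
    rw [Fintype.card_fin, ← div_le_iff₀ hε0, ← div_mul_eq_mul_div, hn]
    exact Nat.le_ceil _
  have hn0 : (0 : ℝ) < n := by
    have := log_pos (by norm_num : (1 : ℝ) < 100)
    simp only [Fintype.card_fin] at hN
    nlinarith [hε0]
  set p := (D {p : X × Y | g p.1 ≠ p.2}).toReal
  rcases le_or_gt p (ε / 12) with hlow | hlow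
  · refine ofReal_one_sub_le_of_compl_subset
      (measureReal_card_filter_mem_ge_le_hundredth hg hN hlow) ?_
    intro T hT
    simp only [Set.mem_compl_iff, Set.mem_ofPred_eq, not_le, Fintype.card_fin] at hT ⊢
    exact ⟨fun _ => by rw [div_le_iff₀ hn0]; linarith, fun h => absurd h (by linarith)⟩
  rcases le_or_gt p (ε / 4) with hmid | hhigh
  · refine ofReal_one_sub_le_of_compl_subset (B := ∅) (by simp) fun T _ => ?_
    exact ⟨fun h => absurd h (by linarith), fun h => absurd h (by linarith)⟩
  · refine ofReal_one_sub_le_of_compl_subset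
      (measureReal_card_filter_mem_le_le_hundredth hg hN hhigh.le) ?_
    intro T hT
    simp only [Set.mem_compl_iff, Set.mem_ofPred_eq, not_le, Fintype.card_fin] at hT ⊢
    exact ⟨fun h => absurd h (by linarith), fun _ => by rw [lt_div_iff₀ hn0]; linarith⟩
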